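/- arXiv:0902.0423 — 3 statements merged into one kernel-verified Lean document; each statement's English description precedes it below -/
import Mathlib

section
/- For every positive integer k and every real γ, the absolute value of the product ∏_{j=1}^k (1 + (-1/2 + iγ/2)/j) satisfies |∏_{j=1}^k (1 + (-1/2+iγ/2)/j)| ≤ (∏_{j=1}^k (1 - 1/(2j))) · exp(γ² π²/48). -/
/-!
Each factor has real part `1 - 1/(2j) > 0` and imaginary part `γ/(2j)`, so its modulus is
`(1 - 1/(2j)) √(1 + (γ/(2j-1))²) ≤ (1 - 1/(2j)) exp (γ²/(2(2j-1)²))`. The exponents add up to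
at most `γ²/2 · ∑ 1/(2n+1)² = γ²/2 · π²/8`.
-/

open Complex Finset Real

theorem hasSum_one_div_odd_sq :
    HasSum (fun n : ℕ => 1 / (2 * n + 1 : ℝ) ^ 2) (π ^ 2 / 8) := by
  set f : ℕ → ℝ := fun n => 1 / (n : ℝ) ^ 2
  have hzeta : HasSum f (π ^ 2 / 6) := hasSum_zeta_two
  have heven : HasSum (fun n => f (2 * n)) (π ^ 2 / 24) := by
    have hf : (fun n => f (2 * n)) = fun n => f n / 4 := by
      ext n
      simp only [f]
      push_cast
      ring
    rw [hf, show π ^ 2 / 24 = π ^ 2 / 6 / 4 by ring]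
    exact hzeta.div_const 4
  have hodd : HasSum (fun n => f (2 * n + 1)) (π ^ 2 / 8) := by
    obtain ⟨s, hs⟩ : Summable (fun n => f (2 * n + 1)) :=
      hzeta.summable.comp_injective fun a b h => by simpa using h
    have : π ^ 2 / 6 = π ^ 2 / 24 + s := hzeta.unique (heven.even_add_odd hs)
    convert hs using 1
    linarith
  simpa [f] using hodd

theorem sum_Icc_one_div_two_mul_sub_one_sq_le (k : ℕ) :
    ∑ j ∈ Icc 1 k, 1 / (2 * j - 1 : ℝ) ^ 2 ≤ π ^ 2 / 8 := by
  rw [← Ico_add_one_right_eq_Icc, sum_Ico_eq_sum_range]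
  refine le_of_eq_of_le (sum_congr rfl fun n _ => ?_)
    (sum_le_hasSum _ (fun n _ => by positivity) hasSum_one_div_odd_sq)
  push_cast
  ring

theorem Real.sqrt_one_add_le_exp_half (x : ℝ) : √(1 + x) ≤ Real.exp (x / 2) := by
  rw [Real.exp_half]
  exact sqrt_le_sqrt (by linarith [add_one_le_exp x])

theorem Complex.norm_le_re_mul_exp {z : ℂ} (hz : 0 < z.re) :
    ‖z‖ ≤ z.re * Real.exp ((z.im / z.re) ^ 2 / 2) := by
  have hsq : z.re ^ 2 + z.im ^ 2 = z.re ^ 2 * (1 + (z.im / z.re) ^ 2) := by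
    field_simp
  rw [norm_eq_sqrt_sq_add_sq, hsq, Real.sqrt_mul (sq_nonneg _), Real.sqrt_sq hz.le]
  exact mul_le_mul_of_nonneg_left (Real.sqrt_one_add_le_exp_half _) hz.le

theorem one_sub_one_div_two_mul_pos {x : ℝ} (hx : 1 ≤ x) : 0 < 1 - 1 / (2 * x) := by
  rw [sub_pos, div_lt_one (by linarith)]
  linarith

theorem norm_one_add_div_natCast_le (γ : ℝ) {j : ℕ} (hj : 1 ≤ j) :
    ‖1 + (-(1:ℂ)/2 + (γ:ℂ)/2 * Complex.I) / (j : ℂ)‖ ≤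
      (1 - 1 / (2 * (j : ℝ))) * Real.exp (γ ^ 2 / 2 * (1 / (2 * j - 1 : ℝ) ^ 2)) := by
  set w := 1 + (-(1:ℂ)/2 + (γ:ℂ)/2 * Complex.I) / (j : ℂ)
  have hj' : (1 : ℝ) ≤ j := by exact_mod_cast hj
  have hre : w.re = 1 - 1 / (2 * j) := by
    simp [w, div_natCast_re]
    ring
  have him : w.im = γ / (2 * j) := by simp [w, div_natCast_im, div_div]
  refine (Complex.norm_le_re_mul_exp (hre ▸ one_sub_one_div_two_mul_pos hj')).trans_eq ?_
  rw [hre, him]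
  congr 2
  have : 2 * (j : ℝ) - 1 ≠ 0 := by linarith
  field_simp

theorem abs_prod_one_add_le_general (k : ℕ) (γ : ℝ) :
    ‖∏ j ∈ Finset.Icc 1 k, (1 + (-(1:ℂ)/2 + (γ:ℂ)/2 * Complex.I) / (j : ℂ))‖ ≤
      (∏ j ∈ Finset.Icc 1 k, (1 - 1 / (2 * (j : ℝ)))) * Real.exp (γ ^ 2 * π ^ 2 / 16) := by
  calc ‖∏ j ∈ Icc 1 k, (1 + (-(1:ℂ)/2 + (γ:ℂ)/2 * Complex.I) / (j : ℂ))‖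
      = ∏ j ∈ Icc 1 k, ‖1 + (-(1:ℂ)/2 + (γ:ℂ)/2 * Complex.I) / (j : ℂ)‖ := norm_prod _ _
    _ ≤ ∏ j ∈ Icc 1 k,
          (1 - 1 / (2 * (j : ℝ))) * Real.exp (γ ^ 2 / 2 * (1 / (2 * j - 1 : ℝ) ^ 2)) :=
        prod_le_prod (fun _ _ => norm_nonneg _)
          fun j hj => norm_one_add_div_natCast_le γ (mem_Icc.mp hj).1
    _ = (∏ j ∈ Icc 1 k, (1 - 1 / (2 * (j : ℝ)))) *
          Real.exp (γ ^ 2 / 2 * ∑ j ∈ Icc 1 k, 1 / (2 * j - 1 : ℝ) ^ 2) := by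
        rw [prod_mul_distrib, ← Real.exp_sum, mul_sum]
    _ ≤ (∏ j ∈ Icc 1 k, (1 - 1 / (2 * (j : ℝ)))) * Real.exp (γ ^ 2 / 2 * (π ^ 2 / 8)) := by
        gcongr
        · exact prod_nonneg fun j hj =>
            (one_sub_one_div_two_mul_pos (by exact_mod_cast (mem_Icc.mp hj).1)).le
        · exact sum_Icc_one_div_two_mul_sub_one_sq_le k
    _ = _ := by ring_nf

/-- Bound on the modulus of the product `∏_{j=1}^k (1 + (-1/2 + iγ/2)/j)`. -/
theorem abs_prod_one_add_le (k : ℕ) (hk : 1 ≤ k) (γ : ℝ) :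
    ‖∏ j ∈ Finset.Icc 1 k, (1 + (-(1:ℂ)/2 + (γ:ℂ)/2 * Complex.I) / (j : ℂ))‖ ≤
      (∏ j ∈ Finset.Icc 1 k, (1 - 1 / (2 * (j : ℝ)))) * Real.exp (γ ^ 2 * π ^ 2 / 16) :=
  abs_prod_one_add_le_general k γ
end

section
/- For every positive integer k and real γ, |∏_{j=1}^k (1+(-1/2+iγ/2)/j) − ∏_{j=1}^{k+1} (1+(-1/2+iγ/2)/j)| = |∏_{j=1}^k (1+(-1/2+iγ/2)/j)| · |(-1/2+iγ/2)/(k+1)|, and hence this difference is bounded by C (k+1)^{-1/2} e^{cγ²} for suitable constants C, c > 0 independent of k and γ. -/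
/-!
Since `[δ, k+1] = [δ, k] (1 + δ/(k+1))`, the difference of consecutive products is `-[δ, k] δ/(k+1)`.
For `δ = -1/2 + iγ/2` each factor satisfies `|1 + δ/j|² = (1 - 1/(2j))² + γ²/(4j²)`, and as
`(1 - 1/(2j))² ≥ 1/4` this is at most `(1 - 1/(2j))² e^{γ²/j²}`. Since `∑ 1/j² ≤ 2`, the modulus
`|[δ, k]|` is at most `[-1/2, k] e^{γ²}`, and `[-1/2, k]² (k+1) ≤ 1` by induction on `k`.
-/

open Complex Finset Real

/-- The paper's `[δ choose k]`. -/
def binomProd {K : Type*} [Field K] (δ : K) (k : ℕ) : K :=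
  ∏ j ∈ Icc 1 k, (1 + δ / j)

section Identity

variable {K : Type*}

theorem binomProd_succ [Field K] (δ : K) (k : ℕ) :
    binomProd δ (k + 1) = binomProd δ k * (1 + δ / ((k : K) + 1)) := by
  rw [binomProd, prod_Icc_succ_top (Nat.le_add_left 1 k), Nat.cast_succ]
  rfl

theorem binomProd_sub_binomProd_succ [Field K] (δ : K) (k : ℕ) :
    binomProd δ k - binomProd δ (k + 1) = -(binomProd δ k * (δ / ((k : K) + 1))) := by
  rw [binomProd_succ]
  ring

theorem norm_binomProd_sub_binomProd_succ [NormedField K] (δ : K) (k : ℕ) :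
    ‖binomProd δ k - binomProd δ (k + 1)‖ = ‖binomProd δ k‖ * ‖δ / ((k : K) + 1)‖ := by
  rw [binomProd_sub_binomProd_succ, norm_neg, norm_mul]

end Identity

theorem one_half_le_one_add_neg_half_div {j : ℕ} (hj : 1 ≤ j) : 1 / 2 ≤ 1 + (-1 / 2 : ℝ) / j := by
  have hj' : (1 : ℝ) ≤ j := by exact_mod_cast hj
  have : -1 / 2 ≤ (-1 / 2 : ℝ) / j := by
    rw [le_div_iff₀ (by positivity)]
    linarith
  linarith

theorem binomProd_neg_half_nonneg (k : ℕ) : 0 ≤ binomProd (-1 / 2 : ℝ) k :=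
  prod_nonneg fun _ hj ↦ (one_half_le_one_add_neg_half_div (mem_Icc.mp hj).1).trans' (by norm_num)

theorem binomProd_neg_half_sq_mul_le (k : ℕ) : binomProd (-1 / 2 : ℝ) k ^ 2 * ((k : ℝ) + 1) ≤ 1 := by
  induction k with
  | zero => simp [binomProd]
  | succ n ih =>
    rw [binomProd_succ, mul_pow, Nat.cast_succ]
    have hfactor : (1 + (-1 / 2 : ℝ) / ((n : ℝ) + 1)) ^ 2 * ((n : ℝ) + 1 + 1) ≤ (n : ℝ) + 1 := by
      have hm : (0 : ℝ) < (n : ℝ) + 1 := by positivity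
      rw [show 1 + (-1 / 2 : ℝ) / ((n : ℝ) + 1) = (2 * n + 1) / (2 * ((n : ℝ) + 1)) by
          field_simp; ring, div_pow, div_mul_eq_mul_div, div_le_iff₀ (by positivity)]
      nlinarith
    calc _ = binomProd (-1 / 2 : ℝ) n ^ 2 * ((1 + -1 / 2 / ((n : ℝ) + 1)) ^ 2 * ((n : ℝ) + 1 + 1)) := by
          ring
      _ ≤ binomProd (-1 / 2 : ℝ) n ^ 2 * ((n : ℝ) + 1) := by gcongr
      _ ≤ 1 := ih

theorem binomProd_neg_half_le_rpow (k : ℕ) :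
    binomProd (-1 / 2 : ℝ) k ≤ ((k : ℝ) + 1) ^ (-(1 : ℝ) / 2) := by
  have hk : (0 : ℝ) < (k : ℝ) + 1 := by positivity
  have hrpow : ((k : ℝ) + 1) ^ (-(1 : ℝ) / 2) = 1 / √((k : ℝ) + 1) := by
    rw [neg_div, rpow_neg hk.le, ← sqrt_eq_rpow, one_div]
  rw [hrpow, le_div_iff₀ (sqrt_pos.mpr hk),
    ← sqrt_sq (binomProd_neg_half_nonneg k), ← sqrt_mul (sq_nonneg _)]
  exact sqrt_le_one.mpr (binomProd_neg_half_sq_mul_le k)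

noncomputable def delta (γ : ℝ) : ℂ := -1 / 2 + γ / 2 * I

theorem norm_delta_le_exp (γ : ℝ) : ‖delta γ‖ ≤ rexp (γ ^ 2) := by
  have htri : ‖delta γ‖ ≤ 1 / 2 + |γ| / 2 := by
    refine (norm_add_le _ _).trans_eq ?_
    simp
  have := Real.add_one_le_exp (γ ^ 2)
  nlinarith [abs_nonneg γ, sq_abs γ]

theorem norm_one_add_delta_div_le {j : ℕ} (hj : 1 ≤ j) (γ : ℝ) :
    ‖1 + delta γ / j‖ ≤ (1 + (-1 / 2 : ℝ) / j) * rexp (γ ^ 2 / (2 * j ^ 2)) := by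
  set x : ℝ := 1 + (-1 / 2 : ℝ) / j
  have hx : 1 / 2 ≤ x := one_half_le_one_add_neg_half_div hj
  have hj0 : (j : ℝ) ≠ 0 := by positivity
  have hsplit : 1 + delta γ / j = (x : ℂ) + ((γ / (2 * j) : ℝ) : ℂ) * I := by
    simp only [x, delta]
    push_cast
    field_simp
    ring
  have hsq : ‖1 + delta γ / j‖ ^ 2 = x ^ 2 + (γ / (2 * j)) ^ 2 := by
    rw [Complex.sq_norm, hsplit, normSq_add_mul_I]
  -- `x² ≥ 1/4` turns the additive `γ²/(4j²)` into the relative error `γ²/j²`.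
  have hrel : (γ / (2 * j)) ^ 2 ≤ x ^ 2 * (γ ^ 2 / j ^ 2) := by
    rw [show (γ / (2 * j)) ^ 2 = 1 / 4 * (γ ^ 2 / j ^ 2) by field_simp; ring]
    exact mul_le_mul_of_nonneg_right (by nlinarith) (by positivity)
  have hexp : x ^ 2 * (1 + γ ^ 2 / j ^ 2) ≤ (x * rexp (γ ^ 2 / (2 * j ^ 2))) ^ 2 := by
    rw [mul_pow, ← Real.exp_nat_mul]
    gcongr
    rw [Nat.cast_two, ← mul_div_assoc, mul_div_mul_left _ _ two_ne_zero, add_comm]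
    exact Real.add_one_le_exp _
  rw [← pow_le_pow_iff_left₀ (norm_nonneg _) (by positivity) two_ne_zero]
  nlinarith

theorem sum_Icc_inv_sq_le_two (k : ℕ) : ∑ j ∈ Icc 1 k, ((j : ℝ) ^ 2)⁻¹ ≤ 2 := by
  have hIcc : Icc 1 k = Ioo 0 (k + 1) := by
    ext j
    simp only [mem_Icc, mem_Ioo]
    omega
  simpa [hIcc] using sum_Ioo_inv_sq_le (α := ℝ) 0 (k + 1)

theorem norm_binomProd_delta_le (k : ℕ) (γ : ℝ) :
    ‖binomProd (delta γ) k‖ ≤ binomProd (-1 / 2 : ℝ) k * rexp (γ ^ 2) := by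
  have hsum : ∑ j ∈ Icc 1 k, γ ^ 2 / (2 * (j : ℝ) ^ 2) ≤ γ ^ 2 := by
    have := sum_Icc_inv_sq_le_two k
    calc ∑ j ∈ Icc 1 k, γ ^ 2 / (2 * (j : ℝ) ^ 2)
        = γ ^ 2 / 2 * ∑ j ∈ Icc 1 k, ((j : ℝ) ^ 2)⁻¹ := by
          rw [mul_sum]
          exact sum_congr rfl fun _ _ ↦ by ring
      _ ≤ γ ^ 2 / 2 * 2 := by gcongr
      _ = γ ^ 2 := by ring
  calc ‖binomProd (delta γ) k‖
      = ∏ j ∈ Icc 1 k, ‖1 + delta γ / j‖ := norm_prod _ _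
    _ ≤ ∏ j ∈ Icc 1 k, ((1 + (-1 / 2 : ℝ) / j) * rexp (γ ^ 2 / (2 * j ^ 2))) :=
        prod_le_prod (fun _ _ ↦ norm_nonneg _)
          fun _ hj ↦ norm_one_add_delta_div_le (mem_Icc.mp hj).1 γ
    _ = binomProd (-1 / 2 : ℝ) k * rexp (∑ j ∈ Icc 1 k, γ ^ 2 / (2 * (j : ℝ) ^ 2)) := by
        rw [prod_mul_distrib, Real.exp_sum, binomProd]
    _ ≤ binomProd (-1 / 2 : ℝ) k * rexp (γ ^ 2) := by
        gcongr
        exact binomProd_neg_half_nonneg k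

theorem norm_binomProd_delta_sub_succ_le (k : ℕ) (γ : ℝ) :
    ‖binomProd (delta γ) k - binomProd (delta γ) (k + 1)‖ ≤
      ((k : ℝ) + 1) ^ (-(1 : ℝ) / 2) * rexp (2 * γ ^ 2) := by
  have hk : (1 : ℝ) ≤ (k : ℝ) + 1 := le_add_of_nonneg_left k.cast_nonneg
  have hratio : ‖delta γ / ((k : ℂ) + 1)‖ ≤ rexp (γ ^ 2) := by
    rw [norm_div, show ((k : ℂ) + 1) = ((k + 1 : ℝ) : ℂ) by push_cast; rfl, norm_real,
      norm_of_nonneg (by positivity)]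
    exact (div_le_self (norm_nonneg _) hk).trans (norm_delta_le_exp γ)
  rw [norm_binomProd_sub_binomProd_succ, two_mul, Real.exp_add, ← mul_assoc]
  gcongr
  exact (norm_binomProd_delta_le k γ).trans
    (mul_le_mul_of_nonneg_right (binomProd_neg_half_le_rpow k) (Real.exp_pos _).le)

/-- Difference of consecutive products `[δ choose k]` with `δ = -1/2 + iγ/2`:
an exact identity and the resulting `C (k+1)^{-1/2} e^{cγ²}` bound. -/
theorem prod_diff_identity_and_bound :
    (∀ (k : ℕ), 1 ≤ k → ∀ (γ : ℝ),
      ‖((∏ j ∈ Finset.Icc 1 k, (1 + (-(1:ℂ)/2 + (γ:ℂ)/2 * Complex.I) / (j : ℂ))) -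
          ∏ j ∈ Finset.Icc 1 (k + 1), (1 + (-(1:ℂ)/2 + (γ:ℂ)/2 * Complex.I) / (j : ℂ)))‖ =
        ‖(∏ j ∈ Finset.Icc 1 k, (1 + (-(1:ℂ)/2 + (γ:ℂ)/2 * Complex.I) / (j : ℂ)))‖ *
          ‖((-(1:ℂ)/2 + (γ:ℂ)/2 * Complex.I) / ((k : ℂ) + 1))‖) ∧
    ∃ C > (0:ℝ), ∃ c > (0:ℝ), ∀ (k : ℕ), 1 ≤ k → ∀ (γ : ℝ),
      ‖((∏ j ∈ Finset.Icc 1 k, (1 + (-(1:ℂ)/2 + (γ:ℂ)/2 * Complex.I) / (j : ℂ))) -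
          ∏ j ∈ Finset.Icc 1 (k + 1), (1 + (-(1:ℂ)/2 + (γ:ℂ)/2 * Complex.I) / (j : ℂ)))‖ ≤
        C * ((k : ℝ) + 1) ^ (-(1:ℝ)/2) * Real.exp (c * γ ^ 2) := by
  refine ⟨fun k _ γ ↦ norm_binomProd_sub_binomProd_succ (delta γ) k, 1, one_pos, 2, two_pos,
    fun k _ γ ↦ ?_⟩
  rw [one_mul]
  exact norm_binomProd_delta_sub_succ_le k γ
end

section
/- Let d ≥ 3, b > 2/(d−1), 0 < δ < 1, and define V(x) := (1_{B(0,1+δ)}(x) − 1_{B(0,1−δ)}(x)) / ( ||x|−1|^{2/(d−1)} · (−log ||x|−1|)^b ) for x with ||x|−1| < 1. Then V ∈ L^{(d−1)/2}_{loc}(ℝ^d), but V ∉ L^p_{loc}(ℝ^d) for any p > (d−1)/2; in particular V ∉ L^{d/2}_{loc}(ℝ^d). -/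
/-!
`V` is the radial function `shellProfile α b δ ‖x‖` with `α = 2/(d-1)`, supported on the shell
`1 - δ ≤ ‖x‖ < 1 + δ`. On that shell the polar-coordinates weight `r ^ (d-1)` is bounded above and
below, so `V ∈ Lᵖ` iff `t ^ (-α p) (-log t) ^ (-b p)` is integrable near `t = 0`. The substitution
`t = exp (-u)` turns this into integrability of `exp ((α p - 1) u) u ^ (-b p)` at `+∞`: for
`p = (d-1)/2` this is `u ^ (-b p)` with `b p > 1`, and for larger `p` the integrand tends to `∞`.
Since `V` has compact support, local and global `Lᵖ` agree.
-/

open MeasureTheory Metric Real Set Filter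

lemma not_integrableOn_Ioi_of_tendsto_atTop {f : ℝ → ℝ} (hf : Tendsto f atTop atTop) (a : ℝ) :
    ¬ IntegrableOn f (Ioi a) := by
  intro h
  obtain ⟨M, hM⟩ := eventually_atTop.mp (hf.eventually_ge_atTop 1)
  have hone : IntegrableOn (fun _ => (1 : ℝ)) (Ioi (max a M)) := by
    refine (h.mono_set (Ioi_subset_Ioi (le_max_left a M))).mono' aestronglyMeasurable_const ?_
    filter_upwards [ae_restrict_mem measurableSet_Ioi] with x hx
    simpa using hM x (le_max_right a M |>.trans (le_of_lt hx))
  simp [integrableOn_const_iff] at hone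

lemma integrableOn_rpow_mul_neg_log_rpow_iff {a c δ : ℝ} (hδ : 0 < δ) :
    IntegrableOn (fun t => t ^ (-a) * (-log t) ^ (-c)) (Ioo 0 δ) ↔
      IntegrableOn (fun u => exp ((a - 1) * u) * u ^ (-c)) (Ioi (-log δ)) := by
  have himage : (fun u => exp (-u)) '' Ioi (-log δ) = Ioo 0 δ := by
    rw [← image_image exp Neg.neg, image_neg_Ioi, neg_neg, image_exp_Iio, exp_log hδ]
  rw [← himage, integrableOn_image_iff_integrableOn_abs_deriv_smul measurableSet_Ioi
    (fun u _ => (hasDerivAt_neg u).exp.hasDerivWithinAt)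
    (fun u _ v _ h => neg_injective (exp_injective h))]
  refine integrableOn_congr_fun (fun u _ => ?_) measurableSet_Ioi
  rw [smul_eq_mul, log_exp, neg_neg, rpow_def_of_pos (exp_pos _), log_exp,
    mul_neg_one, abs_neg, abs_of_pos (exp_pos _),
    show exp ((a - 1) * u) = exp (-u) * exp (-u * -a) by rw [← exp_add]; ring_nf]
  ring

lemma integrableOn_rpow_neg_one_mul_neg_log_rpow {c δ : ℝ} (hc : 1 < c) (hδ0 : 0 < δ)
    (hδ1 : δ < 1) : IntegrableOn (fun t => t ^ (-1 : ℝ) * (-log t) ^ (-c)) (Ioo 0 δ) := by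
  rw [integrableOn_rpow_mul_neg_log_rpow_iff hδ0]
  simpa using integrableOn_Ioi_rpow_of_lt (neg_lt_neg hc) (neg_pos.mpr (log_neg hδ0 hδ1))

lemma not_integrableOn_rpow_mul_neg_log_rpow {a c δ : ℝ} (ha : 1 < a) (hδ : 0 < δ) :
    ¬ IntegrableOn (fun t => t ^ (-a) * (-log t) ^ (-c)) (Ioo 0 δ) := by
  rw [integrableOn_rpow_mul_neg_log_rpow_iff hδ]
  refine not_integrableOn_Ioi_of_tendsto_atTop ?_ _
  refine (tendsto_exp_mul_div_rpow_atTop c (a - 1) (by linarith)).congr' ?_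
  filter_upwards [eventually_gt_atTop 0] with u hu
  rw [rpow_neg hu.le, div_eq_mul_inv]

lemma integrableOn_comp_abs_sub_iff {f : ℝ → ℝ} {x₀ δ : ℝ} (hδ : 0 < δ) :
    IntegrableOn (fun r => f |r - x₀|) (Ioo (x₀ - δ) (x₀ + δ)) ↔ IntegrableOn f (Ioo 0 δ) := by
  have hright : IntegrableOn (fun r => f |r - x₀|) (Ioo x₀ (x₀ + δ)) ↔
      IntegrableOn f (Ioo 0 δ) := by
    rw [show Ioo x₀ (x₀ + δ) = (· + x₀) '' Ioo 0 δ by simp [add_comm],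
      (measurePreserving_add_right volume x₀).integrableOn_image
        (Homeomorph.addRight x₀).measurableEmbedding]
    refine integrableOn_congr_fun (fun t ht => ?_) measurableSet_Ioo
    simp [abs_of_pos ht.1]
  have hleft : IntegrableOn (fun r => f |r - x₀|) (Ioc (x₀ - δ) x₀) ↔
      IntegrableOn f (Ioo 0 δ) := by
    rw [show Ioc (x₀ - δ) x₀ = (x₀ - ·) '' Ico 0 δ by simp [image_const_sub_Ico],
      (Measure.measurePreserving_sub_left volume x₀).integrableOn_image
        (Homeomorph.subLeft x₀).measurableEmbedding, ← integrableOn_Ico_iff_integrableOn_Ioo]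
    refine integrableOn_congr_fun (fun t ht => ?_) measurableSet_Ico
    simp [abs_of_nonneg ht.1]
  rw [← Ioc_union_Ioo_eq_Ioo (b := x₀) (by linarith) (by linarith), integrableOn_union, hleft,
    hright, and_self]

noncomputable def shellProfile (α b δ : ℝ) : ℝ → ℝ :=
  (Ico (1 - δ) (1 + δ)).indicator fun r => (|r - 1| ^ α * (-log |r - 1|) ^ b)⁻¹

lemma measurable_shellProfile (α b δ : ℝ) : Measurable (shellProfile α b δ) :=
  (by fun_prop : Measurable fun r : ℝ => (|r - 1| ^ α * (-log |r - 1|) ^ b)⁻¹).indicator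
    measurableSet_Ico

lemma shellProfile_norm_eq_indicator_ball_sub_div {E : Type*} [SeminormedAddGroup E]
    {α b δ : ℝ} (hδ : 0 ≤ δ) (x : E) :
    shellProfile α b δ ‖x‖ =
      ((ball (0 : E) (1 + δ)).indicator (fun _ => (1 : ℝ)) x -
        (ball (0 : E) (1 - δ)).indicator (fun _ => (1 : ℝ)) x) /
      (|‖x‖ - 1| ^ α * (-log |‖x‖ - 1|) ^ b) := by
  simp only [shellProfile, Set.indicator, mem_ball_zero_iff, mem_Ico]
  split_ifs <;> first | (exfalso; grind) | simp

lemma norm_inv_rpow_mul_neg_log_rpow_rpow {α b p t : ℝ} (ht0 : 0 < t) (ht1 : t < 1) :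
    ‖(t ^ α * (-log t) ^ b)⁻¹‖ ^ p = t ^ (-(α * p)) * (-log t) ^ (-(b * p)) := by
  have hlog : 0 < -log t := neg_pos.mpr (log_neg ht0 ht1)
  rw [norm_inv, norm_mul, norm_of_nonneg (rpow_nonneg ht0.le α),
    norm_of_nonneg (rpow_nonneg hlog.le b), inv_rpow (by positivity),
    mul_rpow (rpow_nonneg ht0.le α) (rpow_nonneg hlog.le b), ← rpow_mul ht0.le,
    ← rpow_mul hlog.le, mul_inv, ← rpow_neg ht0.le, ← rpow_neg hlog.le]

section PolarCoordinates

variable {E : Type*} [NormedAddCommGroup E] [NormedSpace ℝ E] [MeasurableSpace E] [BorelSpace E]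
  [FiniteDimensional ℝ E] [Nontrivial E] (μ : Measure E) [μ.IsAddHaarMeasure]

lemma integrable_comp_norm_iff_integrableOn_Icc {f : ℝ → ℝ} {a b : ℝ} (ha : 0 < a)
    (hf : Function.support f ⊆ Icc a b) :
    Integrable (fun x => f ‖x‖) μ ↔ IntegrableOn f (Icc a b) := by
  rw [integrable_fun_norm_addHaar μ]
  set n := Module.finrank ℝ E - 1
  have hsupp : Function.support (fun y : ℝ => y ^ n • f y) ⊆ Icc a b :=
    (Function.support_smul_subset_right (fun y : ℝ => y ^ n) f).trans hf
  have hpow : ContinuousOn (fun y : ℝ => (y ^ n)⁻¹) (Icc a b) :=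
    (continuousOn_pow n).inv₀ fun y hy => pow_ne_zero n (ha.trans_le hy.1).ne'
  rw [integrableOn_iff_integrable_of_support_subset
    (hsupp.trans (Icc_subset_Ici_self.trans (Ici_subset_Ioi.mpr ha))),
    ← integrableOn_iff_integrable_of_support_subset hsupp]
  refine ⟨fun h => ?_, fun h => h.continuousOn_mul (continuousOn_pow n) isCompact_Icc⟩
  refine (h.continuousOn_mul hpow isCompact_Icc).congr_fun (fun y hy => ?_) measurableSet_Icc
  simp [pow_ne_zero n (ha.trans_le hy.1).ne']

lemma memLp_shellProfile_comp_norm_iff {α b δ p : ℝ} (hδ0 : 0 < δ) (hδ1 : δ < 1)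
    (hp : 0 < p) :
    MemLp (fun x : E => shellProfile α b δ ‖x‖) (ENNReal.ofReal p) μ ↔
      IntegrableOn (fun t => t ^ (-(α * p)) * (-log t) ^ (-(b * p))) (Ioo 0 δ) := by
  have hmeas : AEStronglyMeasurable (fun x : E => shellProfile α b δ ‖x‖) μ :=
    ((measurable_shellProfile α b δ).comp measurable_norm).aestronglyMeasurable
  rw [← integrable_norm_rpow_iff hmeas (by simpa using hp) ENNReal.ofReal_ne_top,
    ENNReal.toReal_ofReal hp.le]
  set g : ℝ → ℝ := fun r => ‖shellProfile α b δ r‖ ^ p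
  have hg : Function.support g ⊆ Icc (1 - δ) (1 + δ) := by
    intro r hr
    by_contra h
    exact hr (by simp [g, shellProfile, zero_rpow hp.ne',
      indicator_of_notMem fun h' => h (Ico_subset_Icc_self h')])
  change Integrable (fun x : E => g ‖x‖) μ ↔ _
  rw [integrable_comp_norm_iff_integrableOn_Icc μ (by linarith) hg,
    integrableOn_Icc_iff_integrableOn_Ioo,
    integrableOn_congr_fun (g := fun r => ‖(|r - 1| ^ α * (-log |r - 1|) ^ b)⁻¹‖ ^ p)
      (fun r hr => by simp [g, shellProfile, indicator_of_mem (Ioo_subset_Ico_self hr)])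
      measurableSet_Ioo,
    integrableOn_comp_abs_sub_iff (f := fun t => ‖(t ^ α * (-log t) ^ b)⁻¹‖ ^ p) hδ0]
  exact integrableOn_congr_fun (fun t ht => norm_inv_rpow_mul_neg_log_rpow_rpow ht.1
    (ht.2.trans hδ1)) measurableSet_Ioo

end PolarCoordinates

/-- Stein-type example potential: `V ∈ L^{(d-1)/2}_loc` but `V ∉ L^p_loc` for any
`p > (d-1)/2`; in particular `V ∉ L^{d/2}_loc`. -/
theorem stein_example_potential (d : ℕ) (hd : 3 ≤ d) (b δ : ℝ)
    (hb : 2 / ((d : ℝ) - 1) < b) (hδ0 : 0 < δ) (hδ1 : δ < 1)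
    (V : EuclideanSpace ℝ (Fin d) → ℝ)
    (hV : ∀ x, V x =
      (Set.indicator (Metric.ball (0 : EuclideanSpace ℝ (Fin d)) (1 + δ)) (fun _ => (1:ℝ)) x -
        Set.indicator (Metric.ball (0 : EuclideanSpace ℝ (Fin d)) (1 - δ)) (fun _ => (1:ℝ)) x) /
      (|‖x‖ - 1| ^ ((2 : ℝ) / ((d : ℝ) - 1)) * (-Real.log |‖x‖ - 1|) ^ b)) :
    (∀ K : Set (EuclideanSpace ℝ (Fin d)), IsCompact K →
        MemLp V (ENNReal.ofReal (((d : ℝ) - 1) / 2)) (volume.restrict K)) ∧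
    (∀ p : ℝ, ((d : ℝ) - 1) / 2 < p →
      ¬ (∀ K : Set (EuclideanSpace ℝ (Fin d)), IsCompact K →
          MemLp V (ENNReal.ofReal p) (volume.restrict K))) := by
  have : Nonempty (Fin d) := ⟨⟨0, by omega⟩⟩
  have hd1 : (0 : ℝ) < d - 1 := by
    have : (3 : ℝ) ≤ d := by exact_mod_cast hd
    linarith
  set α : ℝ := 2 / ((d : ℝ) - 1)
  obtain rfl : V = fun x => shellProfile α b δ ‖x‖ :=
    funext fun x => (hV x).trans (shellProfile_norm_eq_indicator_ball_sub_div hδ0.le x).symm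
  have key p (hp : 0 < p) :=
    memLp_shellProfile_comp_norm_iff (volume : Measure (EuclideanSpace ℝ (Fin d))) (α := α)
      (b := b) hδ0 hδ1 hp
  refine ⟨fun K _ => ?_, fun p hp hloc => ?_⟩
  · have hαq : α * ((d - 1) / 2) = 1 := by simp only [α]; field_simp
    have hbq : 1 < b * ((d - 1) / 2) := by
      have := (div_lt_iff₀ hd1).mp hb
      linarith
    refine ((key _ (by positivity)).2 ?_).restrict K
    rw [hαq]
    exact integrableOn_rpow_neg_one_mul_neg_log_rpow hbq hδ0 hδ1
  · have hsupp : Function.support (fun x : EuclideanSpace ℝ (Fin d) => shellProfile α b δ ‖x‖) ⊆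
        closedBall 0 (1 + δ) := fun x hx =>
      mem_closedBall_zero_iff.mpr (support_indicator_subset hx).2.le
    have hglobal := hloc _ (isCompact_closedBall 0 (1 + δ))
    rw [← memLp_indicator_iff_restrict measurableSet_closedBall, indicator_eq_self.mpr hsupp]
      at hglobal
    have hαp : 1 < α * p := by
      rw [div_mul_eq_mul_div, one_lt_div hd1]
      linarith
    exact not_integrableOn_rpow_mul_neg_log_rpow hαp hδ0 ((key p (by linarith)).1 hglobal)
end
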